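/- Let (Ω, 𝒢, ℚ) be a probability space, f : Ω → [0,∞) a measurable function with ∫ f dℚ = 1, ℋ a sub-σ-algebra of 𝒢, and x an integrable random variable such that f·x is ℚ-integrable. If the measure P with density f with respect to ℚ is equivalent to ℚ, then P-almost surely E_P[x | ℋ] = E_ℚ[f·x | ℋ] / E_ℚ[f | ℋ]. -/
import Mathlib

open MeasureTheory
open scoped ENNReal NNReal

/-- withDensity of `ofReal f` has null set `{f ≤ 0}`. -/
lemma bayes_aux_null {Ω : Type*} (m : MeasurableSpace Ω) (Q : Measure Ω) (f : Ω → ℝ)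
    (hf_meas : Measurable f) :
    (Q.withDensity fun ω => ENNReal.ofReal (f ω)) {ω | f ω ≤ 0} = 0 := by
  have hsm : MeasurableSet {ω | f ω ≤ 0} := hf_meas measurableSet_Iic
  rw [withDensity_apply _ hsm, lintegral_eq_zero_iff hf_meas.ennreal_ofReal]
  filter_upwards [ae_restrict_mem hsm] with ω hω
  simpa using ENNReal.ofReal_eq_zero.mpr hω

/-- Total mass of `ofReal f · Q`. -/
lemma bayes_aux_univ {Ω : Type*} (m : MeasurableSpace Ω) (Q : Measure Ω) (f : Ω → ℝ)
    (hf_nonneg : 0 ≤ f) (hf_int : Integrable f Q) (hf_one : ∫ ω, f ω ∂Q = 1) :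
    (Q.withDensity fun ω => ENNReal.ofReal (f ω)) Set.univ = 1 := by
  rw [withDensity_apply _ MeasurableSet.univ, Measure.restrict_univ,
    ← ofReal_integral_eq_lintegral_ofReal hf_int (Filter.Eventually.of_forall hf_nonneg),
    hf_one, ENNReal.ofReal_one]

/-- Set integrals against the density measure. -/
lemma bayes_aux_setint {Ω : Type*} (m : MeasurableSpace Ω) (Q : Measure Ω) (f : Ω → ℝ)
    (hf_meas : Measurable f) (hf_nonneg : 0 ≤ f) (z : Ω → ℝ) {s : Set Ω}
    (hs : MeasurableSet s) :
    ∫ ω in s, z ω ∂(Q.withDensity fun ω => ENNReal.ofReal (f ω)) = ∫ ω in s, f ω * z ω ∂Q := by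
  have hdens : (fun ω => ENNReal.ofReal (f ω)) = (fun ω => (((f ω).toNNReal : ℝ≥0) : ℝ≥0∞)) := rfl
  rw [hdens, setIntegral_withDensity_eq_setIntegral_smul hf_meas.real_toNNReal z hs]
  refine integral_congr_ae (Filter.Eventually.of_forall fun ω => ?_)
  simp [NNReal.smul_def, Real.coe_toNNReal _ (hf_nonneg ω)]

/-- Integrability transfer for the density measure. -/
lemma bayes_aux_int {Ω : Type*} (m : MeasurableSpace Ω) (Q : Measure Ω) (f : Ω → ℝ)
    (hf_meas : Measurable f) (hf_nonneg : 0 ≤ f) (z : Ω → ℝ) :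
    Integrable z (Q.withDensity fun ω => ENNReal.ofReal (f ω)) ↔
      Integrable (fun ω => f ω * z ω) Q := by
  have hdens : (fun ω => ENNReal.ofReal (f ω)) = (fun ω => (((f ω).toNNReal : ℝ≥0) : ℝ≥0∞)) := rfl
  rw [hdens, integrable_withDensity_iff hf_meas.real_toNNReal.coe_nnreal_ennreal
    (Filter.Eventually.of_forall fun ω => ENNReal.coe_lt_top)]
  constructor <;> intro hz <;>
    refine hz.congr (Filter.Eventually.of_forall fun ω => ?_) <;>
    simp [mul_comm, Real.coe_toNNReal _ (hf_nonneg ω)]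

/-- If `f > 0` a.e., `f` integrable, `{g ≤ 0}` measurable and
`∫_{g ≤ 0} f = ∫_{g ≤ 0} g`, then `g > 0` a.e. -/
lemma bayes_aux_pos {Ω : Type*} (m : MeasurableSpace Ω) (Q : Measure Ω) (f g : Ω → ℝ)
    (hgs : MeasurableSet {ω | g ω ≤ 0}) (hf_nonneg : 0 ≤ f) (hf_int : Integrable f Q)
    (hf_pos : ∀ᵐ ω ∂Q, 0 < f ω)
    (h1 : ∫ ω in {ω | g ω ≤ 0}, f ω ∂Q = ∫ ω in {ω | g ω ≤ 0}, g ω ∂Q) :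
    ∀ᵐ ω ∂Q, 0 < g ω := by
  have h2 : ∫ ω in {ω | g ω ≤ 0}, g ω ∂Q ≤ 0 := setIntegral_nonpos hgs (fun ω hω => hω)
  have h3 : 0 ≤ ∫ ω in {ω | g ω ≤ 0}, f ω ∂Q :=
    setIntegral_nonneg hgs (fun ω _ => hf_nonneg ω)
  have h4 : ∫ ω in {ω | g ω ≤ 0}, f ω ∂Q = 0 := le_antisymm (h1 ▸ h2) h3
  have h5 : ∀ᵐ ω ∂Q.restrict {ω | g ω ≤ 0}, f ω = 0 := by
    have := (integral_eq_zero_iff_of_nonneg_ae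
      (Filter.Eventually.of_forall (fun ω => hf_nonneg ω)) hf_int.integrableOn).mp h4
    filter_upwards [this] with ω hω using hω
  have h6 : ∀ᵐ ω ∂Q.restrict {ω | g ω ≤ 0}, False := by
    filter_upwards [h5, ae_restrict_of_ae hf_pos] with ω ha hb
    exact absurd ha (ne_of_gt hb)
  have hnull : Q {ω | g ω ≤ 0} = 0 := by
    have h7 : Q.restrict {ω | g ω ≤ 0} Set.univ = 0 := by
      simpa [ae_iff] using (ae_iff.mp h6)
    simpa [Measure.restrict_apply_univ] using h7
  filter_upwards [measure_eq_zero_iff_ae_notMem.mp hnull] with ω hω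
  exact lt_of_not_ge hω

/-- Abstract Bayes formula: if `P = f·dℚ` is equivalent to `ℚ`, then
`E_P[x | ℋ] = E_ℚ[f·x | ℋ] / E_ℚ[f | ℋ]` holds `P`-almost surely. -/
theorem bayes_condexp {Ω : Type*} {𝒢 : MeasurableSpace Ω} (Q : Measure Ω)
    [IsProbabilityMeasure Q] (f : Ω → ℝ) (hf_meas : Measurable f) (hf_nonneg : 0 ≤ f)
    (hf_int : Integrable f Q) (hf_one : ∫ ω, f ω ∂Q = 1)
    (ℋ : MeasurableSpace Ω) (hℋ : ℋ ≤ 𝒢)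
    (x : Ω → ℝ) (hx_int : Integrable x Q)
    (hfx_int : Integrable (fun ω => f ω * x ω) Q)
    (P : @Measure Ω 𝒢) (hP : P = Q.withDensity (fun ω => ENNReal.ofReal (f ω)))
    (hPQ : P ≪ Q) (hQP : Q ≪ P) :
    ∀ᵐ ω ∂P, (P[x | ℋ]) ω =
      (Q[fun ω => f ω * x ω | ℋ]) ω / (Q[f | ℋ]) ω := by
  have hP_univ : P Set.univ = 1 := by
    rw [hP]; exact bayes_aux_univ 𝒢 Q f hf_nonneg hf_int hf_one
  haveI hPprob : IsProbabilityMeasure P := ⟨hP_univ⟩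
  haveI : SigmaFinite (Q.trim hℋ) := by
    have := isFiniteMeasure_trim hℋ (μ := Q)
    infer_instance
  haveI : SigmaFinite (P.trim hℋ) := by
    have := isFiniteMeasure_trim hℋ (μ := P)
    infer_instance
  have hf_pos : ∀ᵐ ω ∂Q, 0 < f ω := by
    have hnull : P {ω | f ω ≤ 0} = 0 := by
      rw [hP]; exact bayes_aux_null 𝒢 Q f hf_meas
    filter_upwards [measure_eq_zero_iff_ae_notMem.mp (hQP hnull)] with ω hω
    exact lt_of_not_ge hω
  set g := Q[f | ℋ] with hg_def
  set h := Q[fun ω => f ω * x ω | ℋ] with hh_def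
  set y := P[x | ℋ] with hy_def
  have hg_pos : ∀ᵐ ω ∂Q, 0 < g ω := by
    have hs_meas : MeasurableSet[ℋ] {ω | g ω ≤ 0} :=
      (stronglyMeasurable_condExp (μ := Q) (f := f) (m := ℋ)).measurable
        (measurableSet_Iic (α := ℝ))
    exact bayes_aux_pos 𝒢 Q f g (hℋ _ hs_meas) hf_nonneg hf_int hf_pos
      (setIntegral_condExp hℋ hf_int hs_meas).symm
  have hintP : ∀ z : Ω → ℝ, Integrable z P ↔ Integrable (fun ω => f ω * z ω) Q := by
    intro z; rw [hP]; exact bayes_aux_int 𝒢 Q f hf_meas hf_nonneg z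
  have hfy_int : Integrable (fun ω => f ω * y ω) Q := (hintP y).mp integrable_condExp
  have hxP : Integrable x P := (hintP x).mpr hfx_int
  have hset : ∀ s : Set Ω, MeasurableSet[ℋ] s →
      ∫ ω in s, f ω * y ω ∂Q = ∫ ω in s, f ω * x ω ∂Q := by
    intro s hs
    have hs' : MeasurableSet[𝒢] s := hℋ _ hs
    have e1 : ∫ ω in s, y ω ∂P = ∫ ω in s, f ω * y ω ∂Q := by
      rw [hP]; exact bayes_aux_setint 𝒢 Q f hf_meas hf_nonneg y hs'
    have e2 : ∫ ω in s, x ω ∂P = ∫ ω in s, f ω * x ω ∂Q := by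
      rw [hP]; exact bayes_aux_setint 𝒢 Q f hf_meas hf_nonneg x hs'
    have e3 : ∫ ω in s, y ω ∂P = ∫ ω in s, x ω ∂P := setIntegral_condExp hℋ hxP hs
    rw [← e1, e3, e2]
  have hyf_int : Integrable (fun ω => y ω * f ω) Q :=
    hfy_int.congr (Filter.Eventually.of_forall fun ω => (mul_comm _ _))
  have hpull : Q[fun ω => y ω * f ω | ℋ] =ᵐ[Q] fun ω => y ω * g ω :=
    condExp_mul_of_stronglyMeasurable_left (μ := Q) (m := ℋ)
      (stronglyMeasurable_condExp (μ := P) (f := x) (m := ℋ)) hyf_int hf_int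
  have hmain : (fun ω => y ω * g ω) =ᵐ[Q] h := by
    refine ae_eq_condExp_of_forall_setIntegral_eq hℋ hfx_int ?_ ?_ ?_
    · intro s hs _
      exact (integrable_condExp.congr hpull).restrict
    · intro s hs _
      have e1 : ∫ ω in s, y ω * g ω ∂Q = ∫ ω in s, (Q[fun ω => y ω * f ω | ℋ]) ω ∂Q :=
        integral_congr_ae (ae_restrict_of_ae (hpull.mono fun ω hω => hω.symm))
      rw [e1, setIntegral_condExp hℋ hyf_int hs]
      have e2 : ∫ ω in s, y ω * f ω ∂Q = ∫ ω in s, f ω * y ω ∂Q :=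
        integral_congr_ae (ae_restrict_of_ae (Filter.Eventually.of_forall
          fun ω => mul_comm _ _))
      rw [e2, hset s hs]
    · exact StronglyMeasurable.aestronglyMeasurable
        ((stronglyMeasurable_condExp (μ := P) (f := x) (m := ℋ)).mul
          (stronglyMeasurable_condExp (μ := Q) (f := f) (m := ℋ)))
  have hfinal : ∀ᵐ ω ∂Q, y ω = h ω / g ω := by
    filter_upwards [hmain, hg_pos] with ω h1 h2
    rw [← h1, mul_div_assoc, div_self (ne_of_gt h2), mul_one]
  exact hPQ.ae_le hfinal
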